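/- Let C be a binary linear [n,k] code with redundancy r = n−k and minimum distance d_min ≤ d_0 ≤ r. Then the ML decoding block error probability over the BEC with erasure probability ε satisfies P_e ≥ Σ_{i=r+1}^{n} C(n,i) ε^i (1−ε)^{n−i} + Σ_{w=d_0}^{r} C(n−d_0, w−d_0) ε^w (1−ε)^{n−w}. -/

import Mathlib

/-!
An erasure pattern `I` defeats ML decoding exactly when the columns of `H` indexed by `I` are
dependent. This happens for every `I` with `#I > r`, since `H` has only `r` rows, and for every
`I` containing the support of a nonzero codeword `c`, since `c` restricted to `I` lies in the
kernel of `H_I`. Enlarging `supp c` to a set `S` with `#S = d₀`, the patterns of the second kind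
with `#I ≤ r` are the `(n - d₀).choose (w - d₀)` supersets of `S` of each weight `w ∈ [d₀, r]`,
and they are disjoint from those of the first kind.
-/

open Finset

namespace Matrix

variable {m n K : Type*} [Fintype n]

theorem submatrix_subtype_mulVec_of_support_subset [CommSemiring K] (H : Matrix m n K)
    {I : Finset n} {c : n → K} (hc : Function.support c ⊆ I) :
    H.submatrix id (fun j : {x // x ∈ I} => (j : n)) *ᵥ (fun j => c j) = H *ᵥ c := by
  ext i
  simp only [mulVec, dotProduct, submatrix_apply, id_eq]
  rw [Finset.sum_coe_sort I (fun j => H i j * c j)]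
  exact Finset.sum_subset (subset_univ I) fun j _ hj => by
    rw [Function.notMem_support.mp fun hj' => hj (hc hj'), mul_zero]

theorem rank_submatrix_lt_card_of_mulVec_eq_zero [Field K] (H : Matrix m n K)
    {I : Finset n} {c : n → K} (hc0 : c ≠ 0) (hHc : H *ᵥ c = 0)
    (hc : Function.support c ⊆ I) :
    (H.submatrix id (fun j : {x // x ∈ I} => (j : n))).rank < #I := by
  set M := H.submatrix id (fun j : {x // x ∈ I} => (j : n))
  have hker : LinearMap.ker M.mulVecLin ≠ ⊥ := by
    refine (Submodule.ne_bot_iff _).mpr ⟨fun j => c j, ?_, fun h => hc0 ?_⟩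
    · rw [LinearMap.mem_ker, mulVecLin_apply, submatrix_subtype_mulVec_of_support_subset H hc,
        hHc]
    · ext j
      by_cases hj : j ∈ I
      · exact congrFun h ⟨j, hj⟩
      · exact Function.notMem_support.mp fun hj' => hj (hc hj')
  have hrank_nullity := M.mulVecLin.finrank_range_add_finrank_ker
  rw [Module.finrank_fintype_fun_eq_card, Fintype.card_coe] at hrank_nullity
  have hnullity_pos := Submodule.one_le_finrank_iff.mpr hker
  rw [rank]
  omega

end Matrix

namespace Finset

variable {α R : Type*} [Fintype α] [DecidableEq α] [CommSemiring R]

theorem sum_filter_superset_card_mem (S : Finset α) {W : Finset ℕ} (hW : ∀ w ∈ W, #S ≤ w)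
    (g : ℕ → R) :
    ∑ I with S ⊆ I ∧ #I ∈ W, g #I
      = ∑ w ∈ W, ((Fintype.card α - #S).choose (w - #S) : R) * g w := by
  rw [← sum_fiberwise_of_maps_to (g := card) fun I hI => (mem_filter.mp hI).2.2]
  refine sum_congr rfl fun w hw => ?_
  have hfiber : ((univ.filter fun I => S ⊆ I ∧ #I ∈ W).filter fun I => #I = w)
      = (univ.powersetCard w).filter (S ⊆ ·) := by
    ext I
    simp only [mem_filter, mem_univ, true_and, mem_powersetCard, subset_univ]
    constructor
    · rintro ⟨⟨hSI, -⟩, rfl⟩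
      exact ⟨rfl, hSI⟩
    · rintro ⟨rfl, hSI⟩
      exact ⟨⟨hSI, hw⟩, rfl⟩
  rw [sum_congr rfl fun I hI => congrArg g (mem_filter.mp hI).2, sum_const, hfiber,
    card_filter_powersetCard_subset S univ w (subset_univ S) (hW w hw), card_univ, nsmul_eq_mul]

end Finset

theorem bec_ml_error_tightened_lower_bound_general (n k r d₀ : ℕ) (hr : r = n - k)
    (hd₀r : d₀ ≤ r)
    (H : Matrix (Fin r) (Fin n) (ZMod 2))
    (hdmin : ∃ c : Fin n → ZMod 2, c ≠ 0 ∧ H.mulVec c = 0 ∧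
      (Finset.univ.filter (fun i => c i ≠ 0)).card ≤ d₀)
    (ε : ℝ) (hε0 : 0 < ε) (hε1 : ε < 1) :
    (∑ i ∈ Finset.Icc (r + 1) n, (n.choose i : ℝ) * ε ^ i * (1 - ε) ^ (n - i))
      + ∑ w ∈ Finset.Icc d₀ r, ((n - d₀).choose (w - d₀) : ℝ) * ε ^ w * (1 - ε) ^ (n - w)
    ≤ ∑ I : Finset (Fin n),
        (if (H.submatrix id (fun j : {x // x ∈ I} => (j : Fin n))).rank < I.card
          then ε ^ I.card * (1 - ε) ^ (n - I.card) else 0) := by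
  obtain ⟨c, hc0, hHc, hcw⟩ := hdmin
  obtain ⟨S, hcS, hS⟩ := exists_superset_card_eq hcw (by rw [Fintype.card_fin]; omega)
  have hsupp : Function.support c ⊆ S := fun j hj => hcS (by simpa using hj)
  set p : ℕ → ℝ := fun w => ε ^ w * (1 - ε) ^ (n - w)
  set fails := fun I : Finset (Fin n) =>
    (H.submatrix id (fun j : {x // x ∈ I} => (j : Fin n))).rank < #I
  -- the vacuous `∅ ⊆ I` lets `sum_filter_superset_card_mem` evaluate both sums
  set A := univ.filter fun I : Finset (Fin n) => ∅ ⊆ I ∧ #I ∈ Icc (r + 1) n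
  set B := univ.filter fun I : Finset (Fin n) => S ⊆ I ∧ #I ∈ Icc d₀ r
  have hAB : Disjoint A B := disjoint_filter.mpr fun I _ hA hB => by
    simp only [mem_Icc] at hA hB
    omega
  have hfails : A ∪ B ⊆ univ.filter fails := by
    intro I hI
    simp only [A, B, mem_union, mem_filter, mem_univ, true_and, mem_Icc] at hI ⊢
    rcases hI with ⟨-, hrI, -⟩ | ⟨hSI, -⟩
    · exact (H.submatrix _ _).rank_le_card_height.trans_lt
        ((Fintype.card_fin r).trans_lt hrI)
    · exact H.rank_submatrix_lt_card_of_mulVec_eq_zero hc0 hHc (hsupp.trans hSI)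
  calc _ = ∑ I ∈ A, p #I + ∑ I ∈ B, p #I := by
        rw [sum_filter_superset_card_mem ∅ (by simp), sum_filter_superset_card_mem S
          (fun w hw => hS ▸ (mem_Icc.mp hw).1)]
        simp [p, hS, mul_assoc]
    _ = ∑ I ∈ A ∪ B, p #I := (sum_union hAB).symm
    _ ≤ ∑ I with fails I, p #I := sum_le_sum_of_subset_of_nonneg hfails fun _ _ _ => by
        simp only [p]; exact mul_nonneg (pow_nonneg hε0.le _) (pow_nonneg (by linarith) _)
    _ = _ := sum_filter _ _

/-- Tightened lower bound: for a binary linear `[n,k]` code with redundancy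
`r = n - k` and minimum distance at most `d₀ ≤ r` (witnessed by a nonzero
codeword of weight at most `d₀`), the ML block error probability over the BEC
with erasure probability `ε` satisfies
`P_e ≥ ∑_{i=r+1}^{n} C(n,i) ε^i (1-ε)^(n-i) + ∑_{w=d₀}^{r} C(n-d₀, w-d₀) ε^w (1-ε)^(n-w)`. -/
theorem bec_ml_error_tightened_lower_bound (n k r d₀ : ℕ) (hk : k ≤ n) (hr : r = n - k)
    (hd₀r : d₀ ≤ r)
    (H : Matrix (Fin r) (Fin n) (ZMod 2))
    (hdmin : ∃ c : Fin n → ZMod 2, c ≠ 0 ∧ H.mulVec c = 0 ∧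
      (Finset.univ.filter (fun i => c i ≠ 0)).card ≤ d₀)
    (ε : ℝ) (hε0 : 0 < ε) (hε1 : ε < 1) :
    (∑ i ∈ Finset.Icc (r + 1) n, (n.choose i : ℝ) * ε ^ i * (1 - ε) ^ (n - i))
      + ∑ w ∈ Finset.Icc d₀ r, ((n - d₀).choose (w - d₀) : ℝ) * ε ^ w * (1 - ε) ^ (n - w)
    ≤ ∑ I : Finset (Fin n),
        (if (H.submatrix id (fun j : {x // x ∈ I} => (j : Fin n))).rank < I.card
          then ε ^ I.card * (1 - ε) ^ (n - I.card) else 0) :=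
  bec_ml_error_tightened_lower_bound_general n k r d₀ hr hd₀r H hdmin ε hε0 hε1
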